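/- Let M be the 2g×2g integer block matrix M = [[0, A+I],[-(A+I), 0]], where A is the g×g all-ones matrix. Then the set of vectors x ∈ ℚ^{2g}, taken modulo ℤ^{2g}, satisfying xᵀ M y ∈ ℤ for all y ∈ ℤ^{2g}, is exactly the subgroup {(a,...,a,b,...,b) mod ℤ^{2g} : a, b ∈ (1/(g+1))ℤ/ℤ}; in particular this group is isomorphic to (ℤ/(g+1)ℤ)². -/

import Mathlib

/-!
Testing `xᵀ M y ∈ ℤ` on the standard basis vectors `y` shows that the condition says exactly
`xᵀ M ∈ ℤ^{2g}`. The two blocks of `xᵀ M` are `∓ (A + I) v` for the two halves `v` of `x`, and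
`((A + I) v)_j = ∑ v + v_j`. So all `v_j` are congruent modulo `ℤ` to `a := -∑ v`, and summing
the congruences over `j` gives `(g + 1) a ∈ ℤ`; conversely such a `v` makes every `∑ v + v_j`
an integer.
-/

open Matrix

section Integrality

variable {ι : Type*} [Fintype ι]

theorem exists_intCast_eq_neg_iff {R : Type*} [Ring R] (q : R) :
    (∃ k : ℤ, -q = k) ↔ ∃ k : ℤ, q = k :=
  ⟨fun ⟨k, hk⟩ => ⟨-k, by rw [Int.cast_neg, ← hk, neg_neg]⟩,
    fun ⟨k, hk⟩ => ⟨-k, by rw [Int.cast_neg, hk]⟩⟩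

theorem forall_dotProduct_intCast_iff {R : Type*} [Ring R] [DecidableEq ι] (w : ι → R) :
    (∀ y : ι → ℤ, ∃ k : ℤ, w ⬝ᵥ (fun i => (y i : R)) = k) ↔ ∀ i, ∃ k : ℤ, w i = k := by
  constructor
  · intro h i
    obtain ⟨k, hk⟩ := h (Pi.single i 1)
    have hy : (fun j => ((Pi.single i 1 : ι → ℤ) j : R)) = Pi.single i 1 := by
      ext j; by_cases hj : j = i <;> simp [hj]
    exact ⟨k, by rwa [hy, dotProduct_single, mul_one] at hk⟩
  · intro h y
    choose f hf using h
    exact ⟨∑ i, f i * y i, by simp [dotProduct, hf]⟩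

theorem forall_sum_add_intCast_iff (v : ι → ℚ) :
    (∀ j, ∃ k : ℤ, ∑ i, v i + v j = k) ↔
      ∃ a : ℚ, (∃ k : ℤ, ((Fintype.card ι : ℚ) + 1) * a = k) ∧ ∀ i, ∃ k : ℤ, v i - a = k := by
  set S := ∑ i, v i
  constructor
  · intro h
    choose f hf using h
    -- summing `S + v j = f j` over `j` gives `(n + 1) S = ∑ f j`
    have hsum : ((Fintype.card ι : ℚ) + 1) * S = ∑ j, (f j : ℚ) := by
      simp only [← hf, Finset.sum_add_distrib, Finset.sum_const, Finset.card_univ, nsmul_eq_mul]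
      ring
    exact ⟨-S, ⟨-∑ j, f j, by push_cast; linarith⟩, fun i => ⟨f i, by rw [← hf]; ring⟩⟩
  · rintro ⟨a, ⟨k, hk⟩, h⟩ j
    choose f hf using h
    have hS : S = Fintype.card ι * a + ∑ i, (f i : ℚ) := by
      simp only [S, ← hf, Finset.sum_sub_distrib, Finset.sum_const, Finset.card_univ,
        nsmul_eq_mul]
      ring
    exact ⟨k + ∑ i, f i + f j, by push_cast; linear_combination hS + hf j + hk⟩

end Integrality

theorem vecMul_add_one_of_forall_eq_one {ι R : Type*} [Fintype ι] [DecidableEq ι]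
    [NonAssocSemiring R] {A : Matrix ι ι R} (hA : ∀ i j, A i j = 1) (v : ι → R) :
    v ᵥ* (A + 1) = fun j => ∑ i, v i + v j := by
  rw [vecMul_add, vecMul_one]
  ext j
  simp [vecMul, dotProduct, hA]

theorem vecMul_fromBlocks_zero_neg {m n R : Type*} [Fintype m] [Ring R] (B : Matrix m n R)
    (x : m ⊕ m → R) :
    x ᵥ* fromBlocks 0 B (-B) 0 = Sum.elim (-((x ∘ Sum.inr) ᵥ* B)) ((x ∘ Sum.inl) ᵥ* B) := by
  simp [vecMul_fromBlocks, vecMul_neg]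

theorem stmt0_general (g : ℕ)
    (A : Matrix (Fin g) (Fin g) ℚ) (hA : ∀ i j, A i j = 1)
    (M : Matrix (Fin g ⊕ Fin g) (Fin g ⊕ Fin g) ℚ)
    (hM : M = Matrix.fromBlocks 0 (A + 1) (-(A + 1)) 0)
    (x : Fin g ⊕ Fin g → ℚ) :
    (∀ y : Fin g ⊕ Fin g → ℤ,
        ∃ k : ℤ, x ⬝ᵥ M.mulVec (fun i => (y i : ℚ)) = (k : ℚ)) ↔
      ∃ a b : ℚ,
        (∃ k : ℤ, ((g : ℚ) + 1) * a = (k : ℚ)) ∧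
        (∃ k : ℤ, ((g : ℚ) + 1) * b = (k : ℚ)) ∧
        (∀ i : Fin g, ∃ k : ℤ, x (Sum.inl i) - a = (k : ℚ)) ∧
        (∀ i : Fin g, ∃ k : ℤ, x (Sum.inr i) - b = (k : ℚ)) := by
  have hxM : x ᵥ* M = Sum.elim (fun j => -(∑ i, x (Sum.inr i) + x (Sum.inr j)))
      (fun j => ∑ i, x (Sum.inl i) + x (Sum.inl j)) := by
    rw [hM, vecMul_fromBlocks_zero_neg, vecMul_add_one_of_forall_eq_one hA,
      vecMul_add_one_of_forall_eq_one hA]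
    rfl
  simp only [dotProduct_mulVec]
  rw [forall_dotProduct_intCast_iff, Sum.forall, hxM]
  simp only [Sum.elim_inl, Sum.elim_inr, exists_intCast_eq_neg_iff]
  rw [and_comm, forall_sum_add_intCast_iff fun i => x (Sum.inl i),
    forall_sum_add_intCast_iff fun i => x (Sum.inr i), Fintype.card_fin]
  constructor
  · rintro ⟨⟨a, ha, hxa⟩, ⟨b, hb, hxb⟩⟩
    exact ⟨a, b, ha, hb, hxa, hxb⟩
  · rintro ⟨a, b, ha, hb, hxa, hxb⟩
    exact ⟨⟨a, ha, hxa⟩, ⟨b, hb, hxb⟩⟩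

/-- For `M = [[0, A+I],[-(A+I),0]]` with `A` the `g×g` all-ones matrix,
a vector `x ∈ ℚ^{2g}` satisfies `xᵀ M y ∈ ℤ` for all `y ∈ ℤ^{2g}` iff, modulo `ℤ^{2g}`,
`x = (a,…,a,b,…,b)` with `a, b ∈ (1/(g+1))ℤ/ℤ`. -/
theorem stmt0 (g : ℕ) (hg : 1 ≤ g)
    (A : Matrix (Fin g) (Fin g) ℚ) (hA : ∀ i j, A i j = 1)
    (M : Matrix (Fin g ⊕ Fin g) (Fin g ⊕ Fin g) ℚ)
    (hM : M = Matrix.fromBlocks 0 (A + 1) (-(A + 1)) 0)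
    (x : Fin g ⊕ Fin g → ℚ) :
    (∀ y : Fin g ⊕ Fin g → ℤ,
        ∃ k : ℤ, x ⬝ᵥ M.mulVec (fun i => (y i : ℚ)) = (k : ℚ)) ↔
      ∃ a b : ℚ,
        (∃ k : ℤ, ((g : ℚ) + 1) * a = (k : ℚ)) ∧
        (∃ k : ℤ, ((g : ℚ) + 1) * b = (k : ℚ)) ∧
        (∀ i : Fin g, ∃ k : ℤ, x (Sum.inl i) - a = (k : ℚ)) ∧
        (∀ i : Fin g, ∃ k : ℤ, x (Sum.inr i) - b = (k : ℚ)) :=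
  stmt0_general g A hA M hM x
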